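/- arXiv:1602.05614 — 7 statements merged into one kernel-verified Lean document; each statement's English description precedes it below -/
import Mathlib

section
/- Let d ≥ 2 be an integer, let c₀ ≠ c₁ be two rational numbers, and let σ : ℕ → ℚ be a sequence with σ_n ∈ {c₀, c₁} for all n. Then the real number ∑_{n=0}^∞ σ_n / d^n is rational if and only if the sequence (σ_n) is eventually periodic. -/
/-!
Write `σ n = c₀ + (c₁ - c₀) * ε n` with binary digits `ε n ∈ {0, 1}`; since `c₁ ≠ c₀`, the sum
for `σ` is rational exactly when `T 0` is, where `T N = ∑ₙ ε (N + n) / dⁿ`, and `σ`, `ε` are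
eventually periodic together. The tails satisfy `T (N + 1) = d * (T N - ε N)`, so if `T 0` has
denominator `D`, every `D * T N` is an integer; as `0 ≤ T N ≤ d / (d - 1)`, the tails take only
finitely many values. If `ε` does not end in `1 1 1 …` (which is periodic anyway), then `ε N = 1`
exactly when `T N ≥ 1`, so `T` is an orbit of one fixed map of `ℝ`; a finite orbit is eventually
periodic, and `ε`, being a function of `T`, is too. Conversely, a period `p` from `N` on gives
`T N = ∑_{n < p} ε (N + n) / dⁿ + T N / dᵖ`, which makes `T N` and hence `T 0` rational.
-/

open Finset

def EventuallyPeriodic {α : Type*} (s : ℕ → α) : Prop :=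
  ∃ N p : ℕ, 1 ≤ p ∧ ∀ n ≥ N, s (n + p) = s n

namespace EventuallyPeriodic

variable {α β : Type*} {s : ℕ → α}

theorem comp (h : EventuallyPeriodic s) (f : α → β) : EventuallyPeriodic (f ∘ s) := by
  obtain ⟨N, p, hp, hper⟩ := h
  exact ⟨N, p, hp, fun n hn => congrArg f (hper n hn)⟩

theorem of_forall_ge_eq {N : ℕ} {a : α} (h : ∀ n ≥ N, s n = a) : EventuallyPeriodic s :=
  ⟨N, 1, le_rfl, fun n hn => by rw [h n hn, h (n + 1) (by omega)]⟩

theorem of_succ_eq_of_finite_range {F : α → α} (hs : ∀ n, s (n + 1) = F (s n))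
    (hfin : (Set.range s).Finite) : EventuallyPeriodic s := by
  obtain ⟨i, j, hij, hsij⟩ := hfin.exists_lt_map_eq_of_forall_mem fun n => Set.mem_range_self n
  have hiter : ∀ n k, s (n + k) = F^[k] (s n) := by
    intro n k
    induction k with
    | zero => rfl
    | succ k ih => rw [← add_assoc, hs, ih, Function.iterate_succ_apply']
  refine ⟨i, j - i, by omega, fun n hn => ?_⟩
  calc s (n + (j - i)) = s (j + (n - i)) := by congr 1; omega
    _ = s (i + (n - i)) := by rw [hiter, hiter, hsij]
    _ = s n := by congr 1; omega

end EventuallyPeriodic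

theorem exists_rat_eq_iff_not_irrational (x : ℝ) : (∃ q : ℚ, x = q) ↔ ¬Irrational x := by
  simp [Irrational, eq_comm]

theorem finite_setOf_mul_natCast_eq_intCast {D : ℕ} (hD : 0 < D) (C : ℝ) :
    {x : ℝ | 0 ≤ x ∧ x ≤ C ∧ ∃ z : ℤ, x * D = z}.Finite := by
  refine ((Set.finite_Icc (0 : ℤ) ⌊C * D⌋).image fun z : ℤ => (z : ℝ) / D).subset ?_
  rintro x ⟨hx0, hxC, z, hz⟩
  have hD' : (0 : ℝ) < D := by exact_mod_cast hD
  refine ⟨z, ⟨?_, Int.le_floor.2 ?_⟩, by simp only [← hz, mul_div_cancel_right₀ _ hD'.ne']⟩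
  · exact_mod_cast hz ▸ mul_nonneg hx0 hD'.le
  · rw [← hz]; gcongr

noncomputable def digitTail (d : ℕ) (ε : ℕ → ℕ) (N : ℕ) : ℝ :=
  ∑' n, (ε (N + n) : ℝ) / (d : ℝ) ^ n

section Digits

variable {d : ℕ} {ε : ℕ → ℕ}

theorem one_lt_natCast_of_two_le (hd : 2 ≤ d) : (1 : ℝ) < d := by exact_mod_cast hd

theorem digit_div_pow_le_inv_pow (hε : ∀ n, ε n ≤ 1) (n k : ℕ) :
    (ε n : ℝ) / (d : ℝ) ^ k ≤ (d : ℝ)⁻¹ ^ k := by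
  rw [inv_pow, ← one_div]
  gcongr
  exact_mod_cast hε n

theorem summable_digit_div_pow (hd : 2 ≤ d) (hε : ∀ n, ε n ≤ 1) :
    Summable fun n => (ε n : ℝ) / (d : ℝ) ^ n :=
  (summable_geometric_of_lt_one (by positivity)
      (inv_lt_one_of_one_lt₀ (one_lt_natCast_of_two_le hd))).of_nonneg_of_le
    (fun _ => by positivity) fun n => digit_div_pow_le_inv_pow hε n n

theorem digitTail_zero : digitTail d ε 0 = ∑' n, (ε n : ℝ) / (d : ℝ) ^ n := by
  simp [digitTail]

theorem digitTail_nonneg (N : ℕ) : 0 ≤ digitTail d ε N :=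
  tsum_nonneg fun _ => by positivity

theorem digitTail_eq_sum_add (hd : 2 ≤ d) (hε : ∀ n, ε n ≤ 1) (N k : ℕ) :
    digitTail d ε N =
      ∑ n ∈ range k, (ε (N + n) : ℝ) / (d : ℝ) ^ n + digitTail d ε (N + k) / (d : ℝ) ^ k := by
  rw [digitTail, ← (summable_digit_div_pow hd fun n => hε (N + n)).sum_add_tsum_nat_add k,
    digitTail, ← tsum_div_const]
  congr 1
  refine tsum_congr fun n => ?_
  rw [← add_assoc, add_right_comm, pow_add, div_div]

theorem digitTail_eq_add_div (hd : 2 ≤ d) (hε : ∀ n, ε n ≤ 1) (N : ℕ) :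
    digitTail d ε N = ε N + digitTail d ε (N + 1) / d := by
  simpa using digitTail_eq_sum_add hd hε N 1

theorem digitTail_succ (hd : 2 ≤ d) (hε : ∀ n, ε n ≤ 1) (N : ℕ) :
    digitTail d ε (N + 1) = d * (digitTail d ε N - ε N) := by
  have hd0 : (d : ℝ) ≠ 0 := by positivity
  rw [digitTail_eq_add_div hd hε N]
  field_simp
  ring

theorem digitTail_le (hd : 2 ≤ d) (hε : ∀ n, ε n ≤ 1) (N : ℕ) :
    digitTail d ε N ≤ (1 - (d : ℝ)⁻¹)⁻¹ := by
  have hd1 := one_lt_natCast_of_two_le hd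
  rw [← tsum_geometric_of_lt_one (by positivity) (inv_lt_one_of_one_lt₀ hd1)]
  exact (summable_digit_div_pow hd fun n => hε (N + n)).tsum_le_tsum
    (fun n => digit_div_pow_le_inv_pow hε _ n)
    (summable_geometric_of_lt_one (by positivity) (inv_lt_one_of_one_lt₀ hd1))

theorem digitTail_lt_of_exists_eq_zero (hd : 2 ≤ d) (hε : ∀ n, ε n ≤ 1) {N : ℕ}
    (hzero : ∃ m ≥ N, ε m = 0) : digitTail d ε N < (1 - (d : ℝ)⁻¹)⁻¹ := by
  obtain ⟨m, hm, hm0⟩ := hzero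
  have hd1 := one_lt_natCast_of_two_le hd
  rw [← tsum_geometric_of_lt_one (by positivity) (inv_lt_one_of_one_lt₀ hd1)]
  refine (summable_digit_div_pow hd fun n => hε (N + n)).tsum_lt_tsum (i := m - N)
    (fun n => digit_div_pow_le_inv_pow hε _ n) ?_
    (summable_geometric_of_lt_one (by positivity) (inv_lt_one_of_one_lt₀ hd1))
  rw [Nat.add_sub_cancel' hm, hm0]
  simp only [Nat.cast_zero, zero_div]
  positivity

theorem one_le_digitTail (hd : 2 ≤ d) (hε : ∀ n, ε n ≤ 1) {N : ℕ} (h : ε N = 1) :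
    1 ≤ digitTail d ε N := by
  rw [digitTail_eq_add_div hd hε, h, Nat.cast_one, le_add_iff_nonneg_right]
  exact div_nonneg (digitTail_nonneg _) (Nat.cast_nonneg d)

theorem digitTail_lt_one (hd : 2 ≤ d) (hε : ∀ n, ε n ≤ 1) {N : ℕ} (h : ε N = 0)
    (hzero : ∃ m ≥ N + 1, ε m = 0) : digitTail d ε N < 1 := by
  have hd2 : (2 : ℝ) ≤ d := by exact_mod_cast hd
  calc digitTail d ε N = digitTail d ε (N + 1) / d := by
        rw [digitTail_eq_add_div hd hε, h, Nat.cast_zero, zero_add]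
    _ < (1 - (d : ℝ)⁻¹)⁻¹ / d := by
        gcongr; exact digitTail_lt_of_exists_eq_zero hd hε hzero
    _ = ((d : ℝ) - 1)⁻¹ := by field_simp
    _ ≤ 1 := inv_le_one_of_one_le₀ (by linarith)

theorem digit_eq_ite_one_le_digitTail (hd : 2 ≤ d) (hε : ∀ n, ε n ≤ 1)
    (hzero : ∀ N, ∃ m ≥ N, ε m = 0) (N : ℕ) :
    ε N = if 1 ≤ digitTail d ε N then 1 else 0 := by
  rcases Nat.le_one_iff_eq_zero_or_eq_one.1 (hε N) with h | h
  · rw [if_neg (digitTail_lt_one hd hε h (hzero (N + 1))).not_ge, h]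
  · rw [if_pos (one_le_digitTail hd hε h), h]

theorem exists_int_digitTail_mul_den (hd : 2 ≤ d) (hε : ∀ n, ε n ≤ 1) {q : ℚ}
    (hq : digitTail d ε 0 = q) (N : ℕ) : ∃ z : ℤ, digitTail d ε N * q.den = z := by
  induction N with
  | zero => exact ⟨q.num, by rw [hq]; exact_mod_cast q.mul_den_eq_num⟩
  | succ N ih =>
    obtain ⟨z, hz⟩ := ih
    refine ⟨d * z - d * ε N * q.den, ?_⟩
    rw [digitTail_succ hd hε]
    push_cast
    linear_combination (d : ℝ) * hz

theorem finite_range_digitTail (hd : 2 ≤ d) (hε : ∀ n, ε n ≤ 1) {q : ℚ}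
    (hq : digitTail d ε 0 = q) : (Set.range (digitTail d ε)).Finite :=
  (finite_setOf_mul_natCast_eq_intCast q.pos _).subset <| Set.range_subset_iff.2 fun N =>
    ⟨digitTail_nonneg N, digitTail_le hd hε N, exists_int_digitTail_mul_den hd hε hq N⟩

theorem eventuallyPeriodic_of_digitTail_zero_eq_ratCast (hd : 2 ≤ d) (hε : ∀ n, ε n ≤ 1) {q : ℚ}
    (hq : digitTail d ε 0 = q) : EventuallyPeriodic ε := by
  by_cases hzero : ∀ N, ∃ m ≥ N, ε m = 0
  · set g : ℝ → ℕ := fun t => if 1 ≤ t then 1 else 0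
    have hεg : ε = g ∘ digitTail d ε := funext (digit_eq_ite_one_le_digitTail hd hε hzero)
    have horbit : ∀ N, digitTail d ε (N + 1) = d * (digitTail d ε N - g (digitTail d ε N)) :=
      fun N => by rw [digitTail_succ hd hε, digit_eq_ite_one_le_digitTail hd hε hzero N]
    rw [hεg]
    exact (EventuallyPeriodic.of_succ_eq_of_finite_range (F := fun t => d * (t - g t)) horbit
      (finite_range_digitTail hd hε hq)).comp g
  · push Not at hzero
    obtain ⟨N, hN⟩ := hzero
    exact .of_forall_ge_eq fun n hn =>
      (Nat.le_one_iff_eq_zero_or_eq_one.1 (hε n)).resolve_left (hN n hn)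

theorem exists_digitTail_zero_eq_ratCast (hd : 2 ≤ d) (hε : ∀ n, ε n ≤ 1)
    (h : EventuallyPeriodic ε) : ∃ q : ℚ, digitTail d ε 0 = q := by
  obtain ⟨N, p, hp, hper⟩ := h
  have hperiod : digitTail d ε (N + p) = digitTail d ε N :=
    tsum_congr fun n => by rw [add_right_comm, hper _ (by omega)]
  have hdp : (1 : ℝ) < (d : ℝ) ^ p := one_lt_pow₀ (one_lt_natCast_of_two_le hd) (by omega)
  have hN : digitTail d ε N =
      (∑ n ∈ range p, (ε (N + n) : ℝ) / (d : ℝ) ^ n) * d ^ p / (d ^ p - 1) := by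
    have hsplit := digitTail_eq_sum_add hd hε N p
    rw [hperiod] at hsplit
    rw [eq_div_iff (by linarith)]
    field_simp at hsplit
    linear_combination hsplit
  refine ⟨∑ n ∈ range N, (ε n : ℚ) / (d : ℚ) ^ n +
    (∑ n ∈ range p, (ε (N + n) : ℚ) / (d : ℚ) ^ n) * d ^ p / (d ^ p - 1) / d ^ N, ?_⟩
  rw [digitTail_eq_sum_add hd hε 0 N, zero_add, hN]
  simp

theorem tsum_add_mul_digit_div_pow (hd : 2 ≤ d) (hε : ∀ n, ε n ≤ 1) (a b : ℝ) :
    ∑' n, (a + b * ε n) / (d : ℝ) ^ n = a * (1 - (d : ℝ)⁻¹)⁻¹ + b * digitTail d ε 0 := by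
  have hd1 := one_lt_natCast_of_two_le hd
  have hgeom := summable_geometric_of_lt_one (by positivity) (inv_lt_one_of_one_lt₀ hd1)
  simp_rw [add_div, mul_div_assoc, div_eq_mul_inv a, ← inv_pow]
  rw [(hgeom.mul_left a).tsum_add ((summable_digit_div_pow hd hε).mul_left b), tsum_mul_left,
    tsum_mul_left, tsum_geometric_of_lt_one (by positivity) (inv_lt_one_of_one_lt₀ hd1),
    digitTail_zero]

end Digits

/-- For an integer `d ≥ 2`, two distinct rationals `c₀ ≠ c₁`, and a sequence
`σ : ℕ → ℚ` taking values in `{c₀, c₁}`, the real number `∑_{n=0}^∞ σ n / d^n`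
is rational if and only if the sequence `σ` is eventually periodic. -/
theorem rationality_two_values (d : ℕ) (hd : 2 ≤ d) (c₀ c₁ : ℚ) (hne : c₀ ≠ c₁)
    (σ : ℕ → ℚ) (hσ : ∀ n, σ n = c₀ ∨ σ n = c₁) :
    (∃ q : ℚ, (∑' n : ℕ, (σ n : ℝ) / (d : ℝ) ^ n) = (q : ℝ)) ↔
      (∃ N p : ℕ, 1 ≤ p ∧ ∀ n ≥ N, σ (n + p) = σ n) := by
  set ε : ℕ → ℕ := fun n => if σ n = c₁ then 1 else 0 with hε_def
  have hε : ∀ n, ε n ≤ 1 := fun n => by simp only [hε_def]; split_ifs <;> omega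
  have hσε : σ = (fun k : ℕ => c₀ + (c₁ - c₀) * k) ∘ ε := by
    funext n
    rcases hσ n with h | h <;> simp [hε_def, h, hne]
  have hsum : ∑' n : ℕ, (σ n : ℝ) / (d : ℝ) ^ n =
      ((c₀ * (1 - (d : ℚ)⁻¹)⁻¹ : ℚ) : ℝ) + ((c₁ - c₀ : ℚ) : ℝ) * digitTail d ε 0 := by
    push_cast
    rw [← tsum_add_mul_digit_div_pow hd hε]
    exact tsum_congr fun n => by rw [hσε, Function.comp_apply]; push_cast; rfl
  change _ ↔ EventuallyPeriodic σ
  rw [exists_rat_eq_iff_not_irrational, hsum, irrational_ratCast_add_iff,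
    irrational_ratCast_mul_iff, and_iff_right (sub_ne_zero.2 hne.symm),
    ← exists_rat_eq_iff_not_irrational]
  constructor
  · rintro ⟨q, hq⟩
    rw [hσε]
    exact (eventuallyPeriodic_of_digitTail_zero_eq_ratCast hd hε hq).comp _
  · exact fun h => exists_digitTail_zero_eq_ratCast hd hε (h.comp fun x => if x = c₁ then 1 else 0)
end

section
/- Let K be a field equipped with a nonarchimedean absolute value |·| : K → ℝ with |2| = 1. Let t ∈ K satisfy 0 < |t| < 1. Then for every a ∈ K with |a| ≤ 1, one has max( |(a² − t)²| , |4a(a−1)(a−t)| ) = (max(|a|, |t|))². -/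
private lemma na_sub_le {K : Type*} [Field K] (v : AbsoluteValue K ℝ)
    (hna : IsNonarchimedean v) (x y : K) : v (x - y) ≤ max (v x) (v y) := by
  have := hna x (-y)
  simpa [sub_eq_add_neg] using this

private lemma na_sub_eq_right {K : Type*} [Field K] (v : AbsoluteValue K ℝ)
    (hna : IsNonarchimedean v) {x y : K} (h : v x < v y) : v (x - y) = v y := by
  refine le_antisymm ((na_sub_le v hna x y).trans (max_le h.le le_rfl)) ?_
  have h1 : v y = v (x - (x - y)) := by ring_nf
  have h2 := na_sub_le v hna x (x - y)
  rw [← h1] at h2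
  rcases max_cases (v x) (v (x - y)) with ⟨he, _⟩ | ⟨he, _⟩
  · rw [he] at h2; linarith
  · rw [he] at h2; exact h2

private lemma na_sub_eq_left {K : Type*} [Field K] (v : AbsoluteValue K ℝ)
    (hna : IsNonarchimedean v) {x y : K} (h : v y < v x) : v (x - y) = v x := by
  have := na_sub_eq_right v hna (x := y) (y := x) h
  rw [← v.map_neg, neg_sub] at this
  exact this

/-- For a field `K` with a nonarchimedean absolute value `v` with `v 2 = 1`, and `t ∈ K`
with `0 < v t < 1`: for every `a ∈ K` with `v a ≤ 1`,
`max (v ((a² - t)²)) (v (4a(a-1)(a-t))) = (max (v a) (v t))²`. -/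
theorem lattes_order_function {K : Type*} [Field K] (v : AbsoluteValue K ℝ)
    (hna : IsNonarchimedean v) (h2 : v 2 = 1) (t : K) (ht0 : 0 < v t) (ht1 : v t < 1)
    (a : K) (ha : v a ≤ 1) :
    max (v ((a ^ 2 - t) ^ 2)) (v (4 * a * (a - 1) * (a - t))) =
      (max (v a) (v t)) ^ 2 := by
  have h4 : v 4 = 1 := by
    have : (4 : K) = 2 * 2 := by norm_num
    rw [this, v.map_mul, h2]; ring
  have ha0 : 0 ≤ v a := v.nonneg a
  have hsq : v (a ^ 2) = v a ^ 2 := by rw [v.map_pow]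
  have hfst : v ((a ^ 2 - t) ^ 2) = v (a ^ 2 - t) ^ 2 := v.map_pow _ _
  have hsnd : v (4 * a * (a - 1) * (a - t)) = v a * (v (a - 1) * v (a - t)) := by
    rw [v.map_mul, v.map_mul, v.map_mul, h4]; ring
  have ham1 : v (a - 1) ≤ 1 := by
    have := na_sub_le v hna a 1
    simpa [ha] using this
  rcases le_or_gt (v a) (v t) with hle | hlt
  · -- v a ≤ v t : max = v t
    have hmax : max (v a) (v t) = v t := max_eq_right hle
    have hlt2 : v (a ^ 2) < v t := by
      rw [hsq]
      nlinarith
    have h1 : v ((a ^ 2 - t) ^ 2) = v t ^ 2 := by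
      rw [hfst, na_sub_eq_right v hna hlt2]
    have hamt : v (a - t) ≤ v t := by
      have := na_sub_le v hna a t
      simpa [max_eq_right hle] using this
    have h2' : v (4 * a * (a - 1) * (a - t)) ≤ v t ^ 2 := by
      rw [hsnd]
      calc v a * (v (a - 1) * v (a - t)) ≤ v t * (1 * v t) := by
            refine mul_le_mul hle (mul_le_mul ham1 hamt (v.nonneg _) zero_le_one)
              (mul_nonneg (v.nonneg _) (v.nonneg _)) ht0.le
        _ = v t ^ 2 := by ring
    rw [hmax, h1, max_eq_left h2']
  · -- v t < v a : max = v a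
    have hmax : max (v a) (v t) = v a := max_eq_left hlt.le
    have hamt : v (a - t) = v a := na_sub_eq_left v hna hlt
    rcases lt_or_eq_of_le ha with ha1 | ha1
    · -- v a < 1
      have ham1' : v (a - 1) = 1 := by
        have := na_sub_eq_right v hna (x := a) (y := (1 : K)) (by simpa using ha1)
        simpa using this
      have h2' : v (4 * a * (a - 1) * (a - t)) = v a ^ 2 := by
        rw [hsnd, ham1', hamt]; ring
      have h1 : v ((a ^ 2 - t) ^ 2) ≤ v a ^ 2 := by
        rw [hfst]
        have hle2 : v (a ^ 2 - t) ≤ v a := by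
          refine (na_sub_le v hna _ _).trans (max_le ?_ hlt.le)
          rw [hsq]; nlinarith
        nlinarith [v.nonneg (a ^ 2 - t)]
      rw [hmax, h2', max_eq_right h1]
    · -- v a = 1
      have hsq1 : v (a ^ 2) = 1 := by rw [hsq, ha1]; norm_num
      have h1 : v ((a ^ 2 - t) ^ 2) = 1 := by
        rw [hfst, na_sub_eq_left v hna (by rw [hsq1]; exact ht1)]
        rw [hsq1]; ring
      have hamt' : v (a - t) ≤ 1 := by rw [hamt, ← ha1]
      have h2' : v (4 * a * (a - 1) * (a - t)) ≤ 1 := by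
        rw [hsnd, ha1, one_mul]
        nlinarith [v.nonneg (a - 1), v.nonneg (a - t)]
      rw [hmax, ha1, h1, max_eq_left h2']
      norm_num
end

section
/- Let K be a field equipped with a nonarchimedean absolute value |·| : K → ℝ with |2| = 1, let t ∈ K satisfy 0 < |t| < 1, and set f(a) = (a² − t)²/(4a(a−1)(a−t)). Then: (i) if |t| < |a|² and |a| < 1, then |f(a)| = |a|²; (ii) if |a|² < |t| and |t| < |a|, then |f(a)| = |t|²/|a|². -/
/-!
When `|t| < |a| < 1` the ultrametric inequality is an equality for `a - 1` and `a - t`, so the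
denominator `4a(a - 1)(a - t)` has absolute value `|a|²`. The numerator `(a² - t)²` has absolute
value `|a|⁴` or `|t|²` according as `|a|²` or `|t|` is the larger term of `a² - t`.
-/

namespace IsNonarchimedean

lemma sub_eq_left_of_lt {R F α : Type*} [Semiring R] [LinearOrder R] [AddGroup α]
    [FunLike F α R] [AddGroupSeminormClass F α R] {f : F} (hna : IsNonarchimedean f) {x y : α}
    (h_lt : f y < f x) : f (x - y) = f x := by
  rw [sub_eq_add_neg]
  exact add_eq_left_of_lt hna (by rwa [map_neg_eq_map])

end IsNonarchimedean

section Lattes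

variable {K : Type*} [Field K] {v : AbsoluteValue K ℝ}

lemma abv_lattes_denom (hna : IsNonarchimedean v) (h2 : v 2 = 1) {t a : K}
    (hta : v t < v a) (ha1 : v a < 1) :
    v (4 * a * (a - 1) * (a - t)) = v a ^ 2 := by
  have h4 : v 4 = 1 := by
    rw [show (4 : K) = 2 * 2 by norm_num, map_mul, h2, one_mul]
  have ha_sub_one : v (a - 1) = 1 := by
    rw [AbsoluteValue.map_sub, hna.sub_eq_left_of_lt (by rwa [map_one]), map_one]
  rw [map_mul, map_mul, map_mul, h4, ha_sub_one, hna.sub_eq_left_of_lt hta]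
  ring

lemma abv_lattes (hna : IsNonarchimedean v) (h2 : v 2 = 1) {t a : K}
    (hta : v t < v a) (ha1 : v a < 1) :
    v ((a ^ 2 - t) ^ 2 / (4 * a * (a - 1) * (a - t))) = v (a ^ 2 - t) ^ 2 / v a ^ 2 := by
  rw [map_div₀, map_pow, abv_lattes_denom hna h2 hta ha1]

end Lattes

theorem lattes_tent_middle_general {K : Type*} [Field K] (v : AbsoluteValue K ℝ)
    (hna : IsNonarchimedean v) (h2 : v 2 = 1) (t : K) (ht1 : v t < 1)
    (f : K → K) (hf : ∀ a, f a = (a ^ 2 - t) ^ 2 / (4 * a * (a - 1) * (a - t))) :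
    (∀ a : K, v t < (v a) ^ 2 → v a < 1 → v (f a) = (v a) ^ 2) ∧
    (∀ a : K, (v a) ^ 2 < v t → v t < v a → v (f a) = (v t) ^ 2 / (v a) ^ 2) := by
  constructor
  · intro a hta ha1
    have hta' : v t < v a := hta.trans_le (pow_le_of_le_one (v.nonneg a) ha1.le two_ne_zero)
    have ha0 : v a ^ 2 ≠ 0 := ((v.nonneg t).trans_lt hta).ne'
    have hnum : v (a ^ 2 - t) = v a ^ 2 := by
      rw [hna.sub_eq_left_of_lt (by rwa [map_pow]), map_pow]
    rw [hf, abv_lattes hna h2 hta' ha1, hnum, sq (v a ^ 2), mul_div_cancel_right₀ _ ha0]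
  · intro a hat hta
    have ha1 : v a < 1 := (pow_lt_one_iff_of_nonneg (v.nonneg a) two_ne_zero).mp (hat.trans ht1)
    have hnum : v (a ^ 2 - t) = v t := by
      rw [AbsoluteValue.map_sub, hna.sub_eq_left_of_lt (by rwa [map_pow])]
    rw [hf, abv_lattes hna h2 hta ha1, hnum]

/-- For a field `K` with a nonarchimedean absolute value `v` with `v 2 = 1`, `t ∈ K` with
`0 < v t < 1`, and `f a = (a² - t)² / (4a(a-1)(a-t))`:
(i) if `v t < (v a)²` and `v a < 1` then `v (f a) = (v a)²`;
(ii) if `(v a)² < v t` and `v t < v a` then `v (f a) = (v t)² / (v a)²`. -/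
theorem lattes_tent_middle {K : Type*} [Field K] (v : AbsoluteValue K ℝ)
    (hna : IsNonarchimedean v) (h2 : v 2 = 1) (t : K) (ht0 : 0 < v t) (ht1 : v t < 1)
    (f : K → K) (hf : ∀ a, f a = (a ^ 2 - t) ^ 2 / (4 * a * (a - 1) * (a - t))) :
    (∀ a : K, v t < (v a) ^ 2 → v a < 1 → v (f a) = (v a) ^ 2) ∧
    (∀ a : K, (v a) ^ 2 < v t → v t < v a → v (f a) = (v t) ^ 2 / (v a) ^ 2) :=
  lattes_tent_middle_general v hna h2 t ht1 f hf
end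

section
/- Let K be a field equipped with a nonarchimedean absolute value |·| : K → ℝ with |2| = 1, let t ∈ K satisfy 0 < |t| < 1, and set f(a) = (a² − t)²/(4a(a−1)(a−t)). Then: (i) if |a| > 1, then |f(a)| = |a|; (ii) if |a| = 1 and |a − 1| = 1, then |f(a)| = 1; (iii) if |a| = 1, a ≠ 1, and |a − 1| < 1, then |f(a)| = |a − 1|^{-1} > 1. -/
/-! Since `|t| < 1 ≤ |a|`, the ultrametric inequality gives `|a - t| = |a|` and `|a² - t| = |a|²`,
and `|4| = |2|² = 1`, so `|f(a)| = |a|² / |a - 1|` on the whole region `|a| ≥ 1`. The three cases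
only differ in `|a - 1|`: it equals `|a|` when `|a| > 1`, and is `1` or `< 1` on the unit sphere. -/

lemma IsNonarchimedean.sub_eq_left_of_lt_s7 {R F α : Type*} [Semiring R] [LinearOrder R]
    [AddGroup α] [FunLike F α R] [AddGroupSeminormClass F α R] {f : F}
    (hna : IsNonarchimedean f) {x y : α} (h_lt : f y < f x) : f (x - y) = f x := by
  rw [sub_eq_add_neg]
  exact hna.add_eq_left_of_lt (by rwa [map_neg_eq_map])

lemma AbsoluteValue.map_lattes_eq_sq_div_of_one_le {K : Type*} [Field K] {v : AbsoluteValue K ℝ}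
    (hna : IsNonarchimedean v) (h2 : v 2 = 1) {t a : K} (ht : v t < 1) (ha : 1 ≤ v a) :
    v ((a ^ 2 - t) ^ 2 / (4 * a * (a - 1) * (a - t))) = v a ^ 2 / v (a - 1) := by
  have h4 : v 4 = 1 := by rw [show (4 : K) = 2 ^ 2 by norm_num, map_pow, h2, one_pow]
  have hsq : v (a ^ 2 - t) = v a ^ 2 :=
    (hna.sub_eq_left_of_lt_s7 (by rw [map_pow]; nlinarith)).trans (map_pow v a 2)
  have hat : v (a - t) = v a := hna.sub_eq_left_of_lt_s7 (ht.trans_le ha)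
  have ha0 : v a ≠ 0 := (zero_lt_one.trans_le ha).ne'
  rw [map_div₀, map_pow, map_mul, map_mul, map_mul, h4, hsq, hat]
  field_simp

theorem lattes_tent_boundary_general {K : Type*} [Field K] (v : AbsoluteValue K ℝ)
    (hna : IsNonarchimedean v) (h2 : v 2 = 1) (t : K) (ht1 : v t < 1)
    (f : K → K) (hf : ∀ a, f a = (a ^ 2 - t) ^ 2 / (4 * a * (a - 1) * (a - t))) :
    (∀ a : K, 1 < v a → v (f a) = v a) ∧
    (∀ a : K, v a = 1 → v (a - 1) = 1 → v (f a) = 1) ∧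
    (∀ a : K, v a = 1 → a ≠ 1 → v (a - 1) < 1 →
      v (f a) = (v (a - 1))⁻¹ ∧ 1 < v (f a)) := by
  have hfa : ∀ a, 1 ≤ v a → v (f a) = v a ^ 2 / v (a - 1) := fun a ha => by
    rw [hf a]
    exact v.map_lattes_eq_sq_div_of_one_le hna h2 ht1 ha
  refine ⟨fun a ha => ?_, fun a ha ha1 => ?_, fun a ha hne ha1 => ?_⟩
  · have ha1 : v (a - 1) = v a := hna.sub_eq_left_of_lt_s7 (by rwa [map_one])
    rw [hfa a ha.le, ha1, sq, mul_div_cancel_right₀ _ (zero_lt_one.trans ha).ne']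
  · rw [hfa a ha.ge, ha, ha1, one_pow, div_one]
  · have hinv : v (f a) = (v (a - 1))⁻¹ := by rw [hfa a ha.ge, ha, one_pow, one_div]
    refine ⟨hinv, hinv ▸ (one_lt_inv₀ (v.pos (sub_ne_zero.mpr hne))).mpr ha1⟩

/-- For a field `K` with a nonarchimedean absolute value `v` with `v 2 = 1`, `t ∈ K` with
`0 < v t < 1`, and `f a = (a² - t)² / (4a(a-1)(a-t))`:
(i) if `v a > 1` then `v (f a) = v a`;
(ii) if `v a = 1` and `v (a - 1) = 1` then `v (f a) = 1`;
(iii) if `v a = 1`, `a ≠ 1` and `v (a - 1) < 1` then `v (f a) = (v (a - 1))⁻¹ > 1`. -/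
theorem lattes_tent_boundary {K : Type*} [Field K] (v : AbsoluteValue K ℝ)
    (hna : IsNonarchimedean v) (h2 : v 2 = 1) (t : K) (ht0 : 0 < v t) (ht1 : v t < 1)
    (f : K → K) (hf : ∀ a, f a = (a ^ 2 - t) ^ 2 / (4 * a * (a - 1) * (a - t))) :
    (∀ a : K, 1 < v a → v (f a) = v a) ∧
    (∀ a : K, v a = 1 → v (a - 1) = 1 → v (f a) = 1) ∧
    (∀ a : K, v a = 1 → a ≠ 1 → v (a - 1) < 1 →
      v (f a) = (v (a - 1))⁻¹ ∧ 1 < v (f a)) :=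
  lattes_tent_boundary_general v hna h2 t ht1 f hf
end

section
/- Let K be a field equipped with a nonarchimedean absolute value |·| : K → ℝ with |2| = 1, and let t ∈ K satisfy 0 < |t| < 1. Then for every a ∈ K with |a| ≤ 1, one has max( |(a+1)(a−t)| , |a+t| ) = max(|a|, |t|). -/
/-- For a field `K` with a nonarchimedean absolute value `v` with `v 2 = 1` and `t ∈ K`
with `0 < v t < 1`: for every `a ∈ K` with `v a ≤ 1`,
`max (v ((a+1)(a-t))) (v (a+t)) = max (v a) (v t)`. -/
theorem quadratic_order_function {K : Type*} [Field K] (v : AbsoluteValue K ℝ)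
    (hna : IsNonarchimedean v) (h2 : v 2 = 1) (t : K) (ht0 : 0 < v t) (ht1 : v t < 1)
    (a : K) (ha : v a ≤ 1) :
    max (v ((a + 1) * (a - t))) (v (a + t)) = max (v a) (v t) := by
  have hsub : ∀ x y : K, v (x - y) ≤ max (v x) (v y) := by
    intro x y
    have := hna x (-y)
    simpa [sub_eq_add_neg] using this
  have hamt : v (a - t) ≤ max (v a) (v t) := hsub a t
  have hapt : v (a + t) ≤ max (v a) (v t) := hna a t
  rcases lt_or_eq_of_le ha with h1 | h1
  · -- v a < 1 : v (a+1) = 1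
    have ha1 : v (a + 1) = 1 := by
      have := IsNonarchimedean.add_eq_max_of_ne (f := v) hna
        (x := a) (y := 1) (by simp [h1.ne])
      simpa [h1.le, max_eq_right] using this
    rw [map_mul, ha1, one_mul]
    -- max (v (a-t)) (v (a+t)) = max (v a) (v t)
    apply le_antisymm
    · exact max_le hamt hapt
    · have hmax : max (v a) (v t) ≤ max (v (a - t)) (v (a + t)) := by
        have h2a : v a ≤ max (v (a - t)) (v (a + t)) := by
          have e : (a - t) + (a + t) = 2 * a := by ring
          have := hna (a - t) (a + t)
          rw [e, map_mul, h2, one_mul] at this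
          exact this
        have h2t : v t ≤ max (v (a - t)) (v (a + t)) := by
          have e : (a + t) - (a - t) = 2 * t := by ring
          have := hsub (a + t) (a - t)
          rw [e, map_mul, h2, one_mul] at this
          exact this.trans (by rw [max_comm])
        exact max_le h2a h2t
      exact hmax
  · -- v a = 1 : v (a+t) = 1, everything ≤ 1
    have hva : v a = 1 := h1
    have hapt1 : v (a + t) = 1 := by
      have := IsNonarchimedean.add_eq_max_of_ne (f := v) hna
        (x := a) (y := t) (by rw [hva]; exact fun h => absurd h.symm ht1.ne)
      rw [this, hva, max_eq_left ht1.le]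
    have ha1 : v (a + 1) ≤ 1 := by
      have := hna a 1
      simpa [hva] using this
    have hamt1 : v (a - t) ≤ 1 := hamt.trans (by simp [hva, ht1.le])
    rw [hapt1, hva, max_eq_left ht1.le]
    apply le_antisymm
    · apply max_le _ le_rfl
      rw [map_mul]
      calc v (a+1) * v (a-t) ≤ 1 * 1 := by
            exact mul_le_mul ha1 hamt1 (v.nonneg _) zero_le_one
        _ = 1 := by ring
    · exact le_max_right _ _
end

section
/- Let K be a field equipped with a nonarchimedean absolute value |·| : K → ℝ. Let u, p ∈ K with 0 < |u| < 1, |p| = 1, and |p − 1| = 1, and set f(w) = w(w−1)/(u(w−p)). Then for every z ∈ K with |z| ≤ 1: (i) |f(uz) − z/p| ≤ |u|, and (ii) |f(1 + uz) − z/(1−p)| ≤ |u|. -/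
private lemma add_eq_of_lt {K : Type*} [Field K] (v : AbsoluteValue K ℝ)
    (hna : IsNonarchimedean v) {a b : K} (h : v a < v b) : v (a + b) = v b := by
  have h1 : v (a + b) ≤ max (v a) (v b) := hna a b
  rw [max_eq_right h.le] at h1
  have h2 : v b ≤ max (v (a + b)) (v a) := by
    have := hna (a + b) (-a)
    simpa using this
  refine le_antisymm h1 ?_
  rcases le_max_iff.mp h2 with h3 | h3
  · exact h3
  · linarith

/-- For a field `K` with a nonarchimedean absolute value `v`, `u, p ∈ K` with
`0 < v u < 1`, `v p = 1`, `v (p - 1) = 1`, and `f w = w(w-1)/(u(w-p))`: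
for every `z ∈ K` with `v z ≤ 1`,
(i) `v (f (u z) - z / p) ≤ v u` and (ii) `v (f (1 + u z) - z / (1 - p)) ≤ v u`. -/
theorem strongly_polylike_reduction {K : Type*} [Field K] (v : AbsoluteValue K ℝ)
    (hna : IsNonarchimedean v) (u p : K) (hu0 : 0 < v u) (hu1 : v u < 1)
    (hp : v p = 1) (hp1 : v (p - 1) = 1)
    (f : K → K) (hf : ∀ w, f w = w * (w - 1) / (u * (w - p)))
    (z : K) (hz : v z ≤ 1) :
    v (f (u * z) - z / p) ≤ v u ∧ v (f (1 + u * z) - z / (1 - p)) ≤ v u := by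
  have hu : u ≠ 0 := fun h => by simp [h] at hu0
  have hpne : p ≠ 0 := fun h => by simp [h] at hp
  have hzn : 0 ≤ v z := v.nonneg z
  have huz : v (u * z) < 1 := by
    rw [v.map_mul]
    calc v u * v z ≤ v u * 1 := by nlinarith
    _ = v u := mul_one _
    _ < 1 := hu1
  have h1p : v (1 - p) = 1 := by
    rw [show (1 : K) - p = -(p - 1) by ring, v.map_neg, hp1]
  have h1pne : (1 : K) - p ≠ 0 := fun h => by simp [h] at h1p
  -- denominator 1: v (u*z - p) = 1
  have hd1 : v (u * z - p) = 1 := by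
    rw [sub_eq_add_neg, add_eq_of_lt v hna (by rw [v.map_neg, hp]; exact huz), v.map_neg, hp]
  have hd1ne : u * z - p ≠ 0 := fun h => by simp [h] at hd1
  -- denominator 2: v (1 + u*z - p) = 1
  have hd2 : v (1 + u * z - p) = 1 := by
    rw [show (1 : K) + u * z - p = u * z + (1 - p) by ring,
      add_eq_of_lt v hna (by rw [h1p]; exact huz), h1p]
  have hd2ne : (1 : K) + u * z - p ≠ 0 := fun h => by simp [h] at hd2
  constructor
  · have key : f (u * z) - z / p = u * z ^ 2 * (p - 1) / (p * (u * z - p)) := by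
      rw [hf]
      field_simp
      ring
    rw [key, map_div₀ v, v.map_mul, v.map_mul, v.map_mul, v.map_pow, hp1, hd1, hp]
    have : v z ^ 2 ≤ 1 := by nlinarith
    calc v u * v z ^ 2 * 1 / (1 * 1) = v u * v z ^ 2 := by ring
    _ ≤ v u * 1 := by nlinarith
    _ = v u := mul_one _
  · have key : f (1 + u * z) - z / (1 - p) =
        -(u * z ^ 2 * p) / ((1 - p) * (1 + u * z - p)) := by
      rw [hf]
      have : 1 + u * z - p ≠ 0 := hd2ne
      field_simp
      ring
    rw [key, map_div₀ v, v.map_neg, v.map_mul, v.map_mul, v.map_mul, v.map_pow, hp, h1p, hd2]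
    have : v z ^ 2 ≤ 1 := by nlinarith
    calc v u * v z ^ 2 * 1 / (1 * 1) = v u * v z ^ 2 := by ring
    _ ≤ v u * 1 := by nlinarith
    _ = v u := mul_one _
end

section
/- Let K be a field equipped with a nonarchimedean absolute value |·| : K → ℝ. Let u, p₁, p₂ ∈ K with u ≠ 0, |u| < 1, max(|p₁|, |p₂|) = 1, p₁ ≠ 0, and p₁ ≠ p₂. Then |1/(u p₁)| = |(1 − 2u p₁ + u² p₁ p₂)/(u(p₂ − p₁))| if and only if |p₁| = |p₁ − p₂|. -/
/-- For a field `K` with a nonarchimedean absolute value `v`, and `u, p₁, p₂ ∈ K` with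
`u ≠ 0`, `v u < 1`, `max (v p₁) (v p₂) = 1`, `p₁ ≠ 0` and `p₁ ≠ p₂`:
the two repelling fixed-point multipliers `1/(u p₁)` and `(1 - 2u p₁ + u² p₁ p₂)/(u(p₂ - p₁))`
have the same absolute value if and only if `v p₁ = v (p₁ - p₂)`. -/
theorem multipliers_same_absolute_value {K : Type*} [Field K] (v : AbsoluteValue K ℝ)
    (hna : IsNonarchimedean v) (u p₁ p₂ : K) (hu : u ≠ 0) (hu1 : v u < 1)
    (hp : max (v p₁) (v p₂) = 1) (hp₁ : p₁ ≠ 0) (hne : p₁ ≠ p₂) :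
    v (1 / (u * p₁)) = v ((1 - 2 * u * p₁ + u ^ 2 * p₁ * p₂) / (u * (p₂ - p₁))) ↔
      v p₁ = v (p₁ - p₂) := by
  have hup : v u > 0 := v.pos hu
  have hp1pos : v p₁ > 0 := v.pos hp₁
  have hsub : p₂ - p₁ ≠ 0 := sub_ne_zero.mpr (Ne.symm hne)
  have hsubpos : v (p₂ - p₁) > 0 := v.pos hsub
  have hp1le : v p₁ ≤ 1 := hp ▸ le_max_left _ _
  have hp2le : v p₂ ≤ 1 := hp ▸ le_max_right _ _
  have hv2 : v 2 ≤ 1 := by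
    have h := hna 1 1
    rw [show (2 : K) = 1 + 1 by norm_num]
    simpa using h
  -- the "tail" t has absolute value < 1
  have ht1 : v (2 * u * p₁) < 1 := by
    rw [v.map_mul, v.map_mul]
    calc v 2 * v u * v p₁ ≤ 1 * v u * 1 :=
          mul_le_mul (mul_le_mul hv2 le_rfl hup.le zero_le_one) hp1le hp1pos.le
            (by nlinarith [v.nonneg u])
      _ = v u := by ring
      _ < 1 := hu1
  have ht2 : v (u ^ 2 * p₁ * p₂) < 1 := by
    rw [v.map_mul, v.map_mul, v.map_pow]
    calc v u ^ 2 * v p₁ * v p₂ ≤ v u * 1 * 1 := by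
          refine mul_le_mul (mul_le_mul ?_ hp1le hp1pos.le hup.le) hp2le (v.nonneg p₂)
            (by nlinarith [v.nonneg u])
          rw [sq]
          nlinarith [v.nonneg u]
      _ = v u := by ring
      _ < 1 := hu1
  have ht : v (-(2 * u * p₁) + u ^ 2 * p₁ * p₂) < 1 := by
    refine lt_of_le_of_lt (hna _ _) ?_
    rw [v.map_neg]
    exact max_lt ht1 ht2
  have hN : v (1 - 2 * u * p₁ + u ^ 2 * p₁ * p₂) = 1 := by
    have heq : (1 : K) - 2 * u * p₁ + u ^ 2 * p₁ * p₂
        = 1 + (-(2 * u * p₁) + u ^ 2 * p₁ * p₂) := by ring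
    rw [heq, IsNonarchimedean.add_eq_max_of_ne hna (by rw [v.map_one]; exact (ne_of_lt ht).symm)]
    rw [v.map_one]
    exact max_eq_left ht.le
  rw [map_div₀ v, map_div₀ v, hN, v.map_one, v.map_mul, v.map_mul,
    show v (p₁ - p₂) = v (p₂ - p₁) from (v.map_sub p₂ p₁).symm]
  rw [div_eq_div_iff (by positivity) (by positivity)]
  constructor
  · intro h
    have := mul_left_cancel₀ (ne_of_gt hup) (by linarith [h] : v u * v (p₂ - p₁) = v u * v p₁)
    linarith
  · intro h
    rw [h]
end
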